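/- arXiv:2004.01209 — 5 statements merged into one kernel-verified Lean document; each statement's English description precedes it below -/
import Mathlib

section
/- Let (X,𝒫₁,𝒫₂) be a strongly pairwise regular bispace satisfying condition C(2). If each pairwise open cover 𝒞 of X has a countably locally finite parallel refinement (a parallel refinement 𝒱 of 𝒞 expressible as 𝒱 = ⋃_{n∈ℕ} 𝒱ₙ where for each n, every x ∈ X has a 𝒫_{𝒞x}-open neighborhood intersecting only finitely many members of 𝒱ₙ), then each pairwise open cover of X has a locally finite refinement. -/
open Set

variable {X : Type*}

/-- A σ-space structure: contains ∅ and univ, closed under countable unions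
and finite (binary) intersections. -/
def IsSigmaStructure (P : Set (Set X)) : Prop :=
  ∅ ∈ P ∧ Set.univ ∈ P ∧
  (∀ S : Set (Set X), S.Countable → S ⊆ P → ⋃₀ S ∈ P) ∧
  (∀ U ∈ P, ∀ V ∈ P, U ∩ V ∈ P)

/-- The 𝒫-closure of M: intersection of all 𝒫-closed sets containing M. -/
def sCl (P : Set (Set X)) (M : Set X) : Set X :=
  ⋂₀ {F | Fᶜ ∈ P ∧ M ⊆ F}

/-- A collection is locally finite if every point has a 𝒫-open neighborhood
meeting only finitely many members. -/
def SLocallyFinite (P : Set (Set X)) (A : Set (Set X)) : Prop :=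
  ∀ x : X, ∃ N ∈ P, x ∈ N ∧ {a ∈ A | (a ∩ N).Nonempty}.Finite

/-- A pairwise open cover of the bispace (X, P, Q). -/
def PairwiseOpenCover (P Q : Set (Set X)) (B : Set (Set X)) : Prop :=
  ⋃₀ B = Set.univ ∧ B ⊆ P ∪ Q ∧
  (∃ U ∈ B, U ∈ P ∧ U.Nonempty) ∧ (∃ V ∈ B, V ∈ Q ∧ V.Nonempty)

/-- B is a parallel refinement of the pairwise open cover A. -/
def ParallelRefinement (P Q : Set (Set X)) (A B : Set (Set X)) : Prop :=
  PairwiseOpenCover P Q B ∧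
  (∀ U ∈ B, U ∈ P → ∃ V ∈ A, V ∈ P ∧ U ⊆ V) ∧
  (∀ U ∈ B, U ∈ Q → ∃ V ∈ A, V ∈ Q ∧ U ⊆ V)

/-- M is 𝒫_{𝒰x}-open. -/
def PUxOpen (P Q : Set (Set X)) (U : Set (Set X)) (x : X) (M : Set X) : Prop :=
  ((∃ W ∈ U, W ∈ P ∧ x ∈ W) ∧ M ∈ P) ∨ ((∃ W ∈ U, W ∈ Q ∧ x ∈ W) ∧ M ∈ Q)

/-- B is a locally finite refinement of the pairwise open cover A. -/
def LocallyFiniteRefinement (P Q : Set (Set X)) (A B : Set (Set X)) : Prop :=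
  ⋃₀ B = Set.univ ∧ (∀ b ∈ B, ∃ a ∈ A, b ⊆ a) ∧
  ∀ x : X, ∃ N, PUxOpen P Q A x N ∧ x ∈ N ∧ {b ∈ B | (b ∩ N).Nonempty}.Finite

/-- Pairwise paracompactness: every pairwise open cover has a parallel
refinement which is a locally finite refinement of it. -/
def PairwiseParacompact (P Q : Set (Set X)) : Prop :=
  ∀ A, PairwiseOpenCover P Q A →
    ∃ B, ParallelRefinement P Q A B ∧ LocallyFiniteRefinement P Q A B

def PairwiseHausdorff (P Q : Set (Set X)) : Prop :=
  ∀ x y : X, x ≠ y → ∃ U ∈ P, ∃ V ∈ Q, x ∈ U ∧ y ∈ V ∧ U ∩ V = ∅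

def PairwiseNormal (P Q : Set (Set X)) : Prop :=
  ∀ F₁ F₂ : Set X, F₁ᶜ ∈ P → F₂ᶜ ∈ Q → F₁ ∩ F₂ = ∅ →
    ∃ G₁ ∈ P, ∃ G₂ ∈ Q, F₁ ⊆ G₂ ∧ F₂ ⊆ G₁ ∧ G₁ ∩ G₂ = ∅

/-- P is regular with respect to Q. -/
def RegularWrt (P Q : Set (Set X)) : Prop :=
  ∀ (x : X) (F : Set X), Fᶜ ∈ P → x ∉ F →
    ∃ U ∈ P, ∃ V ∈ Q, x ∈ U ∧ F ⊆ V ∧ U ∩ V = ∅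

def PairwiseRegular (P Q : Set (Set X)) : Prop :=
  RegularWrt P Q ∧ RegularWrt Q P

/-- Regularity of a single σ-space. -/
def SRegular (P : Set (Set X)) : Prop := RegularWrt P P

def StronglyPairwiseRegular (P Q : Set (Set X)) : Prop :=
  PairwiseRegular P Q ∧ SRegular P ∧ SRegular Q

/-- Half of condition C(1). -/
def CondC1Half (P Q : Set (Set X)) : Prop :=
  ∀ (FA FB : Set (Set X)), FA ⊆ P → (∀ F ∈ FB, Fᶜ ∈ Q) →
    ⋃₀ FA ⊆ ⋂₀ FB → ∃ K ∈ P, ⋃₀ FA ⊆ K ∧ K ⊆ ⋂₀ FB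

/-- Condition C(1). -/
def CondC1 (P Q : Set (Set X)) : Prop := CondC1Half P Q ∧ CondC1Half Q P

/-- Condition C(2) for a fixed i (Pi ∈ {P, Q}). -/
def CondC2Half (P Q Pi : Set (Set X)) : Prop :=
  ∀ (M : Set X) (B : Set (Set X)), B ⊆ P ∪ Q →
    (∀ b ∈ B, sCl Pi b ∩ M = ∅) →
    ∃ S ∈ Pi, M ⊆ S ∧ S ⊆ (⋃ b ∈ B, sCl Pi b)ᶜ

/-- Condition C(2). -/
def CondC2 (P Q : Set (Set X)) : Prop := CondC2Half P Q P ∧ CondC2Half P Q Q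

/-- Paracompactness of a single σ-space: every open cover has a locally
finite open refinement covering X. -/
def SParacompact (P : Set (Set X)) : Prop :=
  ∀ A ⊆ P, ⋃₀ A = Set.univ →
    ∃ B ⊆ P, ⋃₀ B = Set.univ ∧ (∀ b ∈ B, ∃ a ∈ A, b ⊆ a) ∧ SLocallyFinite P B

/-!
Condition C(2), applied to a single point and to all open sets whose closure misses it, together
with regularity yields for every point `x` an open set `S ∋ x` contained in every `P`- or
`Q`-open set containing `x`. Given a countably locally finite parallel refinement `⋃ n, V n`,
Michael's shrinking `v ↦ v \ ⋃ m < n, ⋃₀ V m` (for `v ∈ V n`) still covers `X`; if `x` lies in a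
member of `V n₀`, then `S` meets no shrunk member of level above `n₀`, and, lying inside the
witnesses of local finiteness of every level, meets only finitely many of lower level.
-/

section MinimalNeighborhood

variable {P Q Pi Pj : Set (Set X)} {S : Set X} {x : X}

lemma subset_sCl (P : Set (Set X)) (M : Set X) : M ⊆ sCl P M :=
  fun _ hy => mem_sInter.mpr fun _ hF => hF.2 hy

lemma notMem_sCl_of_inter_eq_empty {U G : Set X} (hU : U ∈ P) (hxU : x ∈ U)
    (hUG : U ∩ G = ∅) : x ∉ sCl P G := fun hx =>
  mem_sInter.mp hx Uᶜ ⟨by simpa using hU, fun _ hz hzU => hUG.subset ⟨hzU, hz⟩⟩ hxU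

lemma exists_subset_of_regular (hPi : Pi ⊆ P ∪ Q) (hii : RegularWrt Pi Pi)
    (hC2 : CondC2Half P Q Pi) (x : X) :
    ∃ S ∈ Pi, x ∈ S ∧ ∀ O ∈ Pi, x ∈ O → S ⊆ O := by
  obtain ⟨S, hSPi, hxS, hS⟩ := hC2 {x} {b | b ∈ Pi ∧ x ∉ sCl Pi b}
    (fun _ hb => hPi hb.1) fun _ hb => by simpa using hb.2
  refine ⟨S, hSPi, hxS rfl, fun O hO hxO z hz => ?_⟩
  obtain ⟨U, hU, V, hV, hxU, hOV, hUV⟩ := hii x Oᶜ (by simpa using hO) (· hxO)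
  have hzV : z ∉ sCl Pi V := fun hzV =>
    hS hz (mem_biUnion ⟨hV, notMem_sCl_of_inter_eq_empty hU hxU hUV⟩ hzV)
  by_contra hzO
  exact hzV (subset_sCl Pi V (hOV hzO))

/-- Regularity makes the specialization preorder symmetric. -/
lemma mem_of_forall_subset (hii : RegularWrt Pi Pi) (hS : ∀ O ∈ Pi, x ∈ O → S ⊆ O)
    {y : X} (hy : y ∈ S) : ∀ O ∈ Pi, y ∈ O → x ∈ O := by
  intro O hO hyO
  by_contra hxO
  obtain ⟨U, hU, V, hV, hyU, hOV, hUV⟩ := hii y Oᶜ (by simpa using hO) (· hyO)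
  exact hUV.subset ⟨hyU, hS V hV (hOV hxO) hy⟩

lemma subset_of_forall_subset_of_regularWrt (hii : RegularWrt Pi Pi) (hji : RegularWrt Pj Pi)
    (hS : ∀ O ∈ Pi, x ∈ O → S ⊆ O) : ∀ O ∈ Pj, x ∈ O → S ⊆ O := by
  intro O hO hxO z hz
  by_contra hzO
  obtain ⟨U, -, G, hG, hxU, hOG, hUG⟩ := hji x Oᶜ (by simpa using hO) (· hxO)
  exact hUG.subset ⟨hxU, mem_of_forall_subset hii hS hz G hG (hOG hzO)⟩

lemma exists_subset_of_mem_union (hunion : Pi ∪ Pj = P ∪ Q) (hii : RegularWrt Pi Pi)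
    (hji : RegularWrt Pj Pi) (hC2 : CondC2Half P Q Pi) (x : X) :
    ∃ S ∈ Pi, x ∈ S ∧ ∀ O ∈ P ∪ Q, x ∈ O → S ⊆ O := by
  obtain ⟨S, hSPi, hxS, hS⟩ := exists_subset_of_regular (hunion ▸ subset_union_left) hii hC2 x
  refine ⟨S, hSPi, hxS, fun O hO => ?_⟩
  rcases hunion ▸ hO with hO | hO
  · exact hS O hO
  · exact subset_of_forall_subset_of_regularWrt hii hji hS O hO

lemma exists_pUxOpen_subset (hReg : StronglyPairwiseRegular P Q) (hC2 : CondC2 P Q)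
    {C : Set (Set X)} (hC : PairwiseOpenCover P Q C) (x : X) :
    ∃ S, PUxOpen P Q C x S ∧ x ∈ S ∧ ∀ O ∈ P ∪ Q, x ∈ O → S ⊆ O := by
  obtain ⟨W, hWC, hxW⟩ := mem_sUnion.mp (hC.1 ▸ mem_univ x)
  rcases hC.2.1 hWC with hWP | hWQ
  · obtain ⟨S, hSP, hxS, hS⟩ := exists_subset_of_mem_union rfl hReg.2.1 hReg.1.2 hC2.1 x
    exact ⟨S, Or.inl ⟨⟨W, hWC, hWP, hxW⟩, hSP⟩, hxS, hS⟩
  · obtain ⟨S, hSQ, hxS, hS⟩ :=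
      exists_subset_of_mem_union (union_comm Q P) hReg.2.2 hReg.1.1 hC2.2 x
    exact ⟨S, Or.inr ⟨⟨W, hWC, hWQ, hxW⟩, hSQ⟩, hxS, hS⟩

end MinimalNeighborhood

lemma PUxOpen.mem_union {P Q U : Set (Set X)} {x : X} {M : Set X} (h : PUxOpen P Q U x M) :
    M ∈ P ∪ Q :=
  h.imp And.right And.right

lemma ParallelRefinement.exists_superset {P Q A B : Set (Set X)}
    (h : ParallelRefinement P Q A B) {v : Set X} (hv : v ∈ B) : ∃ a ∈ A, v ⊆ a := by
  rcases h.1.2.1 hv with hvP | hvQ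
  · obtain ⟨a, haA, -, hva⟩ := h.2.1 v hv hvP
    exact ⟨a, haA, hva⟩
  · obtain ⟨a, haA, -, hva⟩ := h.2.2 v hv hvQ
    exact ⟨a, haA, hva⟩

section MichaelRefinement

def michaelRefinement (V : ℕ → Set (Set X)) : Set (Set X) :=
  ⋃ n, (· \ ⋃ m < n, ⋃₀ V m) '' V n

variable {V : ℕ → Set (Set X)}

lemma sUnion_michaelRefinement : ⋃₀ michaelRefinement V = ⋃₀ ⋃ n, V n := by
  classical
  refine subset_antisymm ?_ fun x hx => ?_
  · rintro x ⟨-, ⟨-, ⟨n, rfl⟩, v, hv, rfl⟩, hxv, -⟩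
    exact ⟨v, mem_iUnion_of_mem n hv, hxv⟩
  · obtain ⟨w, hw, hxw⟩ := hx
    obtain ⟨n, hwn⟩ := mem_iUnion.mp hw
    have hex : ∃ n, x ∈ ⋃₀ V n := ⟨n, w, hwn, hxw⟩
    obtain ⟨v, hv, hxv⟩ := Nat.find_spec hex
    refine ⟨_, mem_iUnion_of_mem (Nat.find hex) ⟨v, hv, rfl⟩, hxv, ?_⟩
    simp only [mem_iUnion, not_exists]
    exact fun m hm => Nat.find_min hex hm

lemma exists_superset_of_mem_michaelRefinement {b : Set X} (hb : b ∈ michaelRefinement V) :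
    ∃ v ∈ ⋃ n, V n, b ⊆ v := by
  obtain ⟨-, ⟨n, rfl⟩, v, hv, rfl⟩ := hb
  exact ⟨v, mem_iUnion_of_mem n hv, sdiff_subset⟩

lemma finite_michaelRefinement_inter_nonempty {S : Set X} {n₀ : ℕ} (hS : S ⊆ ⋃₀ V n₀)
    (hfin : ∀ m ≤ n₀, {v ∈ V m | (v ∩ S).Nonempty}.Finite) :
    {b ∈ michaelRefinement V | (b ∩ S).Nonempty}.Finite := by
  refine ((Set.finite_Iic n₀).biUnion fun m hm => (hfin m hm).image
    (· \ ⋃ k < m, ⋃₀ V k)).subset ?_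
  rintro - ⟨⟨-, ⟨n, rfl⟩, v, hv, rfl⟩, y, ⟨hyv, hy⟩, hyS⟩
  have hn : n ≤ n₀ := by
    by_contra! hn
    exact hy (mem_biUnion hn (hS hyS))
  exact mem_biUnion (mem_Iic.mpr hn) ⟨v, ⟨hv, y, hyv, hyS⟩, rfl⟩

end MichaelRefinement

theorem stmt_2_general {X : Type*} (P Q : Set (Set X))
    (hReg : StronglyPairwiseRegular P Q) (hC2 : CondC2 P Q)
    (h : ∀ C, PairwiseOpenCover P Q C →
      ∃ V : ℕ → Set (Set X),
        ParallelRefinement P Q C (⋃ n, V n) ∧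
        ∀ n, ∀ x : X, ∃ N, PUxOpen P Q C x N ∧ x ∈ N ∧
          {b ∈ V n | (b ∩ N).Nonempty}.Finite) :
    ∀ C, PairwiseOpenCover P Q C → ∃ B, LocallyFiniteRefinement P Q C B := by
  intro C hC
  obtain ⟨V, hPR, hlf⟩ := h C hC
  obtain ⟨hcover, hVPQ, -⟩ := hPR.1
  refine ⟨michaelRefinement V, sUnion_michaelRefinement.trans hcover, fun b hb => ?_,
    fun x => ?_⟩
  · obtain ⟨v, hv, hbv⟩ := exists_superset_of_mem_michaelRefinement hb
    obtain ⟨a, haC, hva⟩ := hPR.exists_superset hv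
    exact ⟨a, haC, hbv.trans hva⟩
  obtain ⟨S, hSC, hxS, hS⟩ := exists_pUxOpen_subset hReg hC2 hC x
  obtain ⟨v₀, hv₀, hxv₀⟩ := mem_sUnion.mp (hcover ▸ mem_univ x)
  obtain ⟨n₀, hv₀n₀⟩ := mem_iUnion.mp hv₀
  refine ⟨S, hSC, hxS, finite_michaelRefinement_inter_nonempty
    ((hS v₀ (hVPQ hv₀) hxv₀).trans (subset_sUnion_of_mem hv₀n₀)) fun m _ => ?_⟩
  obtain ⟨N, hN, hxN, hfin⟩ := hlf m x
  exact hfin.subset fun v ⟨hv, hvS⟩ => ⟨hv, hvS.mono (inter_subset_inter_right v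
    (hS N hN.mem_union hxN))⟩

theorem stmt_2 {X : Type*} (P Q : Set (Set X))
    (hP : IsSigmaStructure P) (hQ : IsSigmaStructure Q)
    (hReg : StronglyPairwiseRegular P Q) (hC2 : CondC2 P Q)
    (h : ∀ C, PairwiseOpenCover P Q C →
      ∃ V : ℕ → Set (Set X),
        ParallelRefinement P Q C (⋃ n, V n) ∧
        ∀ n, ∀ x : X, ∃ N, PUxOpen P Q C x N ∧ x ∈ N ∧
          {b ∈ V n | (b ∩ N).Nonempty}.Finite) :
    ∀ C, PairwiseOpenCover P Q C → ∃ B, LocallyFiniteRefinement P Q C B :=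
  stmt_2_general P Q hReg hC2 h
end

section
/- Let (X,𝒫) be a regular σ-space. If every 𝒫-open cover 𝒰 of X has a 𝒫-open refinement 𝒱 covering X expressible as 𝒱 = ⋃_{n∈ℕ} Vₙ where each Vₙ is a locally finite collection in X, then every 𝒫-open cover of X has a locally finite refinement (not necessarily open) covering X. -/
open Set

variable {X : Type*}

/-!
Let `⋃ₙ 𝒱ₙ` be a σ-locally finite open refinement of `𝒰` and `Aₙ = ⋃ 𝒱ₙ`. Cutting every member
of `𝒱ₙ` down to `Aₙ \ ⋃_{m<n} Aₘ` still covers `X`. A point `x` lies in some `W ∈ 𝒱ₙ`, and `W ⊆ Aₙ`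
misses every cut-down member of the stages `k > n`; intersecting `W` with neighbourhoods of `x`
witnessing local finiteness of the stages `k ≤ n` gives a neighbourhood meeting finitely many
members.
-/

variable {P : Set (Set X)}

lemma IsSigmaStructure.biInter_finset_mem (hP : IsSigmaStructure P) {ι : Type*} (s : Finset ι)
    {f : ι → Set X} (hf : ∀ i ∈ s, f i ∈ P) : (⋂ i ∈ s, f i) ∈ P := by
  classical
  induction s using Finset.induction with
  | empty => simpa using hP.2.1
  | insert i s _ ih =>
    rw [Finset.set_biInter_insert]
    exact hP.2.2.2 _ (hf i (s.mem_insert_self i)) _ (ih fun j hj => hf j (s.mem_insert_of_mem hj))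

lemma SLocallyFinite.image_of_subset {A : Set (Set X)} (hA : SLocallyFinite P A)
    {f : Set X → Set X} (hf : ∀ a, f a ⊆ a) : SLocallyFinite P (f '' A) := by
  intro x
  obtain ⟨N, hNP, hxN, hfin⟩ := hA x
  refine ⟨N, hNP, hxN, (hfin.image f).subset ?_⟩
  rintro _ ⟨⟨a, ha, rfl⟩, hmeet⟩
  exact ⟨a, ⟨ha, hmeet.mono (inter_subset_inter_left N (hf a))⟩, rfl⟩

lemma SLocallyFinite.iUnion_nat (hP : IsSigmaStructure P) {S : ℕ → Set (Set X)}
    (hS : ∀ n, SLocallyFinite P (S n))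
    (hx : ∀ x, ∃ n, ∃ W ∈ P, x ∈ W ∧ ∀ k, n < k → ∀ b ∈ S k, Disjoint b W) :
    SLocallyFinite P (⋃ n, S n) := by
  intro x
  obtain ⟨n, W, hWP, hxW, hWdisj⟩ := hx x
  choose N hNP hxN hNfin using fun k => hS k x
  let M := W ∩ ⋂ k ∈ Finset.range (n + 1), N k
  have hMN : ∀ k ≤ n, M ⊆ N k := fun k hk =>
    inter_subset_right.trans (biInter_subset_of_mem (Finset.mem_range_succ_iff.mpr hk))
  refine ⟨M, hP.2.2.2 _ hWP _ (hP.biInter_finset_mem _ fun k _ => hNP k),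
    ⟨hxW, mem_iInter₂.mpr fun k _ => hxN k⟩, ?_⟩
  refine ((Finset.range (n + 1)).finite_toSet.biUnion fun k _ => hNfin k).subset ?_
  rintro b ⟨hb, hbM⟩
  obtain ⟨k, hbk⟩ := mem_iUnion.mp hb
  have hkn : k ≤ n := by
    by_contra! hnk
    exact (hbM.mono (inter_subset_inter_right b inter_subset_left)).not_disjoint
      (hWdisj k hnk b hbk)
  exact mem_biUnion (Finset.mem_range_succ_iff.mpr hkn)
    ⟨hbk, hbM.mono (inter_subset_inter_right b (hMN k hkn))⟩

lemma disjoint_self_disjointed_of_lt {α ι : Type*} [GeneralizedBooleanAlgebra α] [Preorder ι]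
    [LocallyFiniteOrderBot ι] (f : ι → α) {i j : ι} (h : i < j) : Disjoint (f i) (disjointed f j) :=
  disjoint_sdiff_self_right.mono_left (Finset.le_sup (f := f) (Finset.mem_Iio.mpr h))

def shrinkStages (V : ℕ → Set (Set X)) (n : ℕ) : Set (Set X) :=
  (· ∩ disjointed (fun m => ⋃₀ V m) n) '' V n

lemma sUnion_iUnion_shrinkStages (V : ℕ → Set (Set X)) :
    ⋃₀ ⋃ n, shrinkStages V n = ⋃₀ ⋃ n, V n := by
  refine (sUnion_subset ?_).antisymm fun x hx => ?_
  · rintro _ ⟨_, ⟨n, rfl⟩, W, hW, rfl⟩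
    exact inter_subset_left.trans (subset_sUnion_of_mem (mem_iUnion_of_mem n hW))
  · rw [sUnion_iUnion, ← iUnion_disjointed] at hx
    obtain ⟨n, hxn⟩ := mem_iUnion.mp hx
    obtain ⟨W, hW, hxW⟩ := disjointed_subset _ n hxn
    exact ⟨_, mem_iUnion_of_mem n ⟨W, hW, rfl⟩, hxW, hxn⟩

lemma SLocallyFinite.iUnion_shrinkStages (hP : IsSigmaStructure P) {V : ℕ → Set (Set X)}
    (hVP : ∀ n, V n ⊆ P) (hVcov : ⋃₀ ⋃ n, V n = univ) (hV : ∀ n, SLocallyFinite P (V n)) :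
    SLocallyFinite P (⋃ n, shrinkStages V n) := by
  refine SLocallyFinite.iUnion_nat hP (fun n => (hV n).image_of_subset fun _ => inter_subset_left)
    fun x => ?_
  obtain ⟨W, hW, hxW⟩ := hVcov.symm.subset (mem_univ x)
  obtain ⟨n, hWn⟩ := mem_iUnion.mp hW
  refine ⟨n, W, hVP n hWn, hxW, fun k hnk => ?_⟩
  rintro _ ⟨W', _, rfl⟩
  have hdisj := disjoint_self_disjointed_of_lt (fun m => ⋃₀ V m) hnk
  exact (hdisj.mono_left (subset_sUnion_of_mem hWn)).symm.mono_left inter_subset_right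

theorem stmt_8_general {X : Type*} (P : Set (Set X)) (hP : IsSigmaStructure P)
    (h : ∀ U ⊆ P, ⋃₀ U = Set.univ →
      ∃ V : ℕ → Set (Set X),
        (⋃ n, V n) ⊆ P ∧ ⋃₀ (⋃ n, V n) = Set.univ ∧
        (∀ b ∈ ⋃ n, V n, ∃ a ∈ U, b ⊆ a) ∧
        ∀ n, SLocallyFinite P (V n)) :
    ∀ U ⊆ P, ⋃₀ U = Set.univ →
      ∃ B : Set (Set X), ⋃₀ B = Set.univ ∧ (∀ b ∈ B, ∃ a ∈ U, b ⊆ a) ∧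
        SLocallyFinite P B := by
  intro U hU hcov
  obtain ⟨V, hVP, hVcov, hVref, hVlf⟩ := h U hU hcov
  refine ⟨⋃ n, shrinkStages V n, (sUnion_iUnion_shrinkStages V).trans hVcov, ?_,
    .iUnion_shrinkStages hP (fun n => (subset_iUnion V n).trans hVP) hVcov hVlf⟩
  rintro _ ⟨_, ⟨n, rfl⟩, W, hWn, rfl⟩
  obtain ⟨a, ha, hWa⟩ := hVref W (mem_iUnion_of_mem n hWn)
  exact ⟨a, ha, inter_subset_left.trans hWa⟩

theorem stmt_8 {X : Type*} (P : Set (Set X)) (hP : IsSigmaStructure P)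
    (hReg : SRegular P)
    (h : ∀ U ⊆ P, ⋃₀ U = Set.univ →
      ∃ V : ℕ → Set (Set X),
        (⋃ n, V n) ⊆ P ∧ ⋃₀ (⋃ n, V n) = Set.univ ∧
        (∀ b ∈ ⋃ n, V n, ∃ a ∈ U, b ⊆ a) ∧
        ∀ n, SLocallyFinite P (V n)) :
    ∀ U ⊆ P, ⋃₀ U = Set.univ →
      ∃ B : Set (Set X), ⋃₀ B = Set.univ ∧ (∀ b ∈ B, ∃ a ∈ U, b ⊆ a) ∧
        SLocallyFinite P B :=
  stmt_8_general P hP h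
end

section
/- Let X = ℝ, let τ₁ be the cocountable topology on ℝ (open sets are ∅ and the complements of countable sets), and let τ₂ = {ℝ, ∅} ∪ {A ⊆ ℝ : A is countable}. Then the bispace (ℝ, τ₁, τ₂) is pairwise regular. -/
open Set

variable {X : Type*}

/- Each σ-structure's closed sets are open in the other one, so a closed set `F` missing `x`
is separated from `x` by the disjoint pair `Fᶜ`, `F`. -/
theorem RegularWrt.of_closed_mem {P Q : Set (Set X)} (h : ∀ F : Set X, Fᶜ ∈ P → F ∈ Q) :
    RegularWrt P Q :=
  fun _ F hF hx => ⟨Fᶜ, hF, F, h F hF, hx, subset_rfl, compl_inter_self F⟩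

theorem mem_countable_of_compl_mem_cocountable {F : Set X}
    (hF : Fᶜ ∈ {A : Set X | A = ∅ ∨ Aᶜ.Countable}) :
    F ∈ ({univ, ∅} ∪ {A : Set X | A.Countable} : Set (Set X)) := by
  rcases hF with hF | hF
  · exact Or.inl (Or.inl (compl_empty_iff.mp hF))
  · exact Or.inr (compl_compl F ▸ hF)

theorem mem_cocountable_of_compl_mem_countable {F : Set X}
    (hF : Fᶜ ∈ ({univ, ∅} ∪ {A : Set X | A.Countable} : Set (Set X))) :
    F ∈ {A : Set X | A = ∅ ∨ Aᶜ.Countable} := by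
  rcases hF with (hF | hF) | hF
  · exact Or.inl (compl_univ_iff.mp hF)
  · exact Or.inr (hF ▸ countable_empty)
  · exact Or.inr hF

theorem stmt_11 :
    PairwiseRegular ({A : Set ℝ | A = ∅ ∨ Aᶜ.Countable})
      ({Set.univ, ∅} ∪ {A : Set ℝ | A.Countable}) :=
  ⟨.of_closed_mem fun _ => mem_countable_of_compl_mem_cocountable,
    .of_closed_mem fun _ => mem_cocountable_of_compl_mem_countable⟩
end

section
/- Let X = ℝ. Let τ₁ be the collection of all sets A ⊆ ℝ such that either (0,1) ⊆ ℝ \ A or A ∩ (0,1) is a union of open subintervals of (0,1); let τ₂ be the collection of all countable subsets of (0,1); and let τ be the collection of all countable unions of members of τ₁ ∪ τ₂. Then τ is a σ-space structure on ℝ but τ is not a topology on ℝ (it is not closed under arbitrary unions). -/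
open Set

variable {X : Type*}

/-- τ₁ of Example 3.1: sets A such that either (0,1) ⊆ ℝ \ A or
A ∩ (0,1) is a union of open subintervals of (0,1). -/
def exTau1 : Set (Set ℝ) :=
  {A | Set.Ioo (0:ℝ) 1 ⊆ Aᶜ ∨
    ∃ I : Set (Set ℝ),
      (∀ J ∈ I, ∃ a b : ℝ, J = Set.Ioo a b ∧ Set.Ioo a b ⊆ Set.Ioo (0:ℝ) 1) ∧
      A ∩ Set.Ioo (0:ℝ) 1 = ⋃₀ I}

/-- τ₂ of Example 3.1: all countable subsets of (0,1). -/
def exTau2 : Set (Set ℝ) :=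
  {A | A.Countable ∧ A ⊆ Set.Ioo (0:ℝ) 1}

/-- τ of Example 3.1: all countable unions of members of τ₁ ∪ τ₂. -/
def exTau : Set (Set ℝ) :=
  {A | ∃ f : ℕ → Set ℝ, (∀ n, f n ∈ exTau1 ∪ exTau2) ∧ A = ⋃ n, f n}

/-!
A set belongs to τ₁ exactly when its trace on (0,1) is open, and τ₂ is closed under subsets, so
τ₁ ∪ τ₂ contains ∅ and ℝ and is closed under binary intersections. Taking countable unions of
such a family gives a σ-structure, since intersections distribute over unions and a countable
union of countable unions is countable.

τ is not a topology: the irrationals of (0,1) are the union of their singletons, which lie in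
τ₂. A member of τ₁ contained in them is an open set without rational points, hence empty, so if
they belonged to τ they would be a countable union of countable sets.
-/

def seqUnions (B : Set (Set X)) : Set (Set X) :=
  {A | ∃ f : ℕ → Set X, (∀ n, f n ∈ B) ∧ A = ⋃ n, f n}

section seqUnions

variable {B : Set (Set X)}

lemma mem_seqUnions_iff (hB : ∅ ∈ B) {A : Set X} :
    A ∈ seqUnions B ↔ ∃ S ⊆ B, S.Countable ∧ A = ⋃₀ S := by
  constructor
  · rintro ⟨f, hf, rfl⟩
    exact ⟨range f, range_subset_iff.2 hf, countable_range f, (sUnion_range f).symm⟩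
  · rintro ⟨S, hSB, hS, rfl⟩
    rcases S.eq_empty_or_nonempty with rfl | hne
    · exact ⟨fun _ => ∅, fun _ => hB, by simp⟩
    · obtain ⟨f, rfl⟩ := hS.exists_eq_range hne
      exact ⟨f, fun n => hSB (mem_range_self n), sUnion_range f⟩

lemma subset_seqUnions : B ⊆ seqUnions B :=
  fun A hA => ⟨fun _ => A, fun _ => hA, (iUnion_const A).symm⟩

lemma sUnion_mem_seqUnions (hB : ∅ ∈ B) {S : Set (Set X)} (hS : S.Countable)
    (hSB : S ⊆ seqUnions B) : ⋃₀ S ∈ seqUnions B := by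
  have hdecomp : ∀ s ∈ S, ∃ T ⊆ B, T.Countable ∧ s = ⋃₀ T := fun s hs =>
    (mem_seqUnions_iff hB).1 (hSB hs)
  choose! T hTB hTc hT using hdecomp
  refine (mem_seqUnions_iff hB).2 ⟨⋃ s ∈ S, T s, iUnion₂_subset hTB, hS.biUnion hTc, ?_⟩
  simp only [sUnion_iUnion]
  rw [sUnion_eq_biUnion]
  exact iUnion₂_congr hT

lemma inter_mem_seqUnions (hB : ∅ ∈ B) (h_inter : ∀ U ∈ B, ∀ V ∈ B, U ∩ V ∈ B) {U V : Set X}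
    (hU : U ∈ seqUnions B) (hV : V ∈ seqUnions B) : U ∩ V ∈ seqUnions B := by
  obtain ⟨S, hSB, hS, rfl⟩ := (mem_seqUnions_iff hB).1 hU
  obtain ⟨T, hTB, hT, rfl⟩ := (mem_seqUnions_iff hB).1 hV
  refine (mem_seqUnions_iff hB).2 ⟨image2 (· ∩ ·) S T, ?_, hS.image2 hT _, ?_⟩
  · rintro _ ⟨s, hs, t, ht, rfl⟩
    exact h_inter s (hSB hs) t (hTB ht)
  · rw [sUnion_image2, sUnion_eq_biUnion, sUnion_eq_biUnion, iUnion₂_inter_iUnion₂]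

lemma isSigmaStructure_seqUnions (h_empty : ∅ ∈ B) (h_univ : univ ∈ B)
    (h_inter : ∀ U ∈ B, ∀ V ∈ B, U ∩ V ∈ B) : IsSigmaStructure (seqUnions B) :=
  ⟨subset_seqUnions h_empty, subset_seqUnions h_univ,
    fun _ hS hSB => sUnion_mem_seqUnions h_empty hS hSB,
    fun _ hU _ hV => inter_mem_seqUnions h_empty h_inter hU hV⟩

end seqUnions

lemma isOpen_iff_eq_sUnion_Ioo {α : Type*} [LinearOrder α] [TopologicalSpace α] [OrderTopology α]
    [NoMaxOrder α] [NoMinOrder α] {T U : Set α} (hUT : U ⊆ T) :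
    IsOpen U ↔ ∃ I : Set (Set α), (∀ J ∈ I, ∃ a b, J = Ioo a b ∧ Ioo a b ⊆ T) ∧ U = ⋃₀ I := by
  constructor
  · intro hU
    refine ⟨{J | ∃ a b, J = Ioo a b ∧ Ioo a b ⊆ U},
      fun J ⟨a, b, hJ, hab⟩ => ⟨a, b, hJ, hab.trans hUT⟩, ?_⟩
    refine Subset.antisymm (fun x hx => ?_) (sUnion_subset fun J ⟨a, b, hJ, hab⟩ => hJ ▸ hab)
    obtain ⟨a, b, hx, hab⟩ := mem_nhds_iff_exists_Ioo_subset.1 (hU.mem_nhds hx)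
    exact ⟨Ioo a b, ⟨a, b, rfl, hab⟩, hx⟩
  · rintro ⟨I, hI, rfl⟩
    refine isOpen_sUnion fun J hJ => ?_
    obtain ⟨a, b, rfl, -⟩ := hI J hJ
    exact isOpen_Ioo

lemma mem_exTau1_iff {A : Set ℝ} : A ∈ exTau1 ↔ IsOpen (A ∩ Ioo 0 1) := by
  rw [isOpen_iff_eq_sUnion_Ioo inter_subset_right, exTau1, mem_ofPred_eq, or_iff_right_of_imp]
  intro h
  rw [(subset_compl_iff_disjoint_left.1 h).inter_eq]
  exact ⟨∅, by simp, sUnion_empty.symm⟩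

lemma inter_mem_exTau1 {A B : Set ℝ} (hA : A ∈ exTau1) (hB : B ∈ exTau1) : A ∩ B ∈ exTau1 := by
  rw [mem_exTau1_iff, inter_inter_distrib_right] at *
  exact hA.inter hB

lemma mem_exTau2_of_subset {A B : Set ℝ} (hA : A ∈ exTau2) (hBA : B ⊆ A) : B ∈ exTau2 :=
  ⟨hA.1.mono hBA, hBA.trans hA.2⟩

lemma exTau_eq_seqUnions : exTau = seqUnions (exTau1 ∪ exTau2) := rfl

lemma isSigmaStructure_exTau : IsSigmaStructure exTau := by
  rw [exTau_eq_seqUnions]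
  refine isSigmaStructure_seqUnions (.inl (mem_exTau1_iff.2 (by simp)))
    (.inl (mem_exTau1_iff.2 (by simpa using isOpen_Ioo))) ?_
  rintro U (hU | hU) V (hV | hV)
  · exact .inl (inter_mem_exTau1 hU hV)
  · exact .inr (mem_exTau2_of_subset hV inter_subset_right)
  all_goals exact .inr (mem_exTau2_of_subset hU inter_subset_left)

lemma eq_empty_of_isOpen_of_subset_irrational {U : Set ℝ} (hU : IsOpen U)
    (hUirr : U ⊆ {x | Irrational x}) : U = ∅ := by
  have : interior {x : ℝ | Irrational x} = ∅ := Rat.denseRange_cast.interior_compl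
  exact subset_empty_iff.1 (this ▸ interior_maximal hUirr hU)

lemma countable_of_mem_exTau_of_subset {A : Set ℝ} (hA : A ∈ exTau)
    (hA01 : A ⊆ Ioo 0 1) (hAirr : A ⊆ {x | Irrational x}) : A.Countable := by
  obtain ⟨f, hf, rfl⟩ := hA
  refine countable_iUnion fun n => ?_
  have hn : f n ⊆ ⋃ n, f n := subset_iUnion f n
  rcases hf n with h | h
  · rw [mem_exTau1_iff, inter_eq_left.2 (hn.trans hA01)] at h
    rw [eq_empty_of_isOpen_of_subset_irrational h (hn.trans hAirr)]
    exact countable_empty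
  · exact h.1

lemma not_countable_Ioo_inter_irrational : ¬ (Ioo (0 : ℝ) 1 ∩ {x | Irrational x}).Countable := by
  intro h
  have hIoo : (Ioo (0 : ℝ) 1).Countable := (h.union (countable_range ((↑) : ℚ → ℝ))).mono
    fun x hx => (em (Irrational x)).imp (⟨hx, ·⟩) not_not.1
  rw [← Cardinal.le_aleph0_iff_set_countable, Cardinal.mk_Ioo_real zero_lt_one] at hIoo
  exact Cardinal.aleph0_lt_continuum.not_ge hIoo

theorem stmt_13 :
    IsSigmaStructure exTau ∧
    ¬ (∀ S : Set (Set ℝ), S ⊆ exTau → ⋃₀ S ∈ exTau) := by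
  refine ⟨isSigmaStructure_exTau, fun h => ?_⟩
  set T := Ioo (0 : ℝ) 1 ∩ {x | Irrational x}
  have hsingletons : (fun x => {x}) '' T ⊆ exTau := by
    rintro _ ⟨x, hx, rfl⟩
    exact subset_seqUnions (.inr ⟨countable_singleton x, singleton_subset_iff.2 hx.1⟩)
  have hT : T ∈ exTau := by
    simpa only [sUnion_image, biUnion_of_singleton] using h _ hsingletons
  exact not_countable_Ioo_inter_irrational
    (countable_of_mem_exTau_of_subset hT inter_subset_left inter_subset_right)
end

section
/- Let X = ℝ. Let τ₁ be the collection of all sets A ⊆ ℝ such that either (0,1) ⊆ ℝ \ A or A ∩ (0,1) is a union of open subintervals of (0,1); let τ₂ be the collection of all countable subsets of (0,1); and let τ be the collection of all countable unions of members of τ₁ ∪ τ₂. Then the σ-space (ℝ, τ) is regular. -/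
open Set

variable {X : Type*}

theorem sRegular_of_singleton_mem {P : Set (Set X)} (hP : ∀ x, {x} ∈ P)
    (hPc : ∀ x, {x}ᶜ ∈ P) : SRegular P := fun x _ _ hxF =>
  ⟨{x}, hP x, {x}ᶜ, hPc x, rfl, subset_compl_singleton_iff.mpr hxF, inter_compl_self _⟩

theorem mem_exTau_of_mem_union {A : Set ℝ} (h : A ∈ exTau1 ∪ exTau2) : A ∈ exTau :=
  ⟨fun _ => A, fun _ => h, (iUnion_const A).symm⟩

theorem singleton_mem_exTau (x : ℝ) : {x} ∈ exTau := by
  apply mem_exTau_of_mem_union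
  by_cases hx : x ∈ Ioo (0 : ℝ) 1
  · exact Or.inr ⟨countable_singleton x, singleton_subset_iff.mpr hx⟩
  · exact Or.inl (Or.inl (subset_compl_singleton_iff.mpr hx))

theorem compl_singleton_mem_exTau1 (x : ℝ) : {x}ᶜ ∈ exTau1 := by
  refine Or.inr ⟨{Ioo 0 (min x 1), Ioo (max x 0) 1}, ?_, ?_⟩
  · rintro J (rfl | rfl)
    · exact ⟨_, _, rfl, Ioo_subset_Ioo_right (min_le_right _ _)⟩
    · exact ⟨_, _, rfl, Ioo_subset_Ioo_left (le_max_right _ _)⟩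
  · rw [sUnion_pair, ← Iio_union_Ioi, union_inter_distrib_right, Iio_inter_Ioo, Ioi_inter_Ioo]

theorem stmt_14 : SRegular exTau :=
  sRegular_of_singleton_mem singleton_mem_exTau
    fun x => mem_exTau_of_mem_union (Or.inl (compl_singleton_mem_exTau1 x))
end
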